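/- Let (R,μ) be a Hopf-Galois algebra over a field k, let g ∈ G₀(R) be a group-like element and set φ(g) = g^{-1} ⊗ g ∈ G(H̲(R)). Then the linear map ψ : P⁰_{g,1}(R) → P_{φ(g),1}(H̲(R)), ψ(x) = g^{-1} ⊗ x − g^{-1}x ⊗ 1, is surjective with kernel k·1; that is, there is a short exact sequence of vector spaces 0 → k → P⁰_{g,1}(R) → P_{φ(g),1}(H̲(R)) → 0. -/

import Mathlib

open TensorProduct MulOpposite

set_option synthInstance.maxHeartbeats 1000000
set_option maxHeartbeats 1000000

noncomputable section

universe u v w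

section Maps

variable (k : Type u) [Field k] (R : Type v) [Ring R] [Algebra k R]

/-- `unop` as a `k`-linear map. -/
def unopL : Rᵐᵒᵖ →ₗ[k] R :=
  ((opLinearEquiv k : R ≃ₗ[k] Rᵐᵒᵖ)).symm.toLinearMap

/-- `op` as a `k`-linear map. -/
def opL : R →ₗ[k] Rᵐᵒᵖ :=
  (opLinearEquiv k : R ≃ₗ[k] Rᵐᵒᵖ).toLinearMap

/-- `Rᵐᵒᵖ ⊗ R → R`, `op x ⊗ y ↦ x * y`. -/
def opMulL : Rᵐᵒᵖ ⊗[k] R →ₗ[k] R :=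
  LinearMap.mul' k R ∘ₗ LinearMap.rTensor R (unopL k R)

/-- `R ⊗ Rᵐᵒᵖ → R`, `x ⊗ op y ↦ x * y`. -/
def mulOpL : R ⊗[k] Rᵐᵒᵖ →ₗ[k] R :=
  LinearMap.mul' k R ∘ₗ LinearMap.lTensor R (unopL k R)

/-- Conjugation `r ↦ g r g⁻¹` as a `k`-linear map. -/
def conjL (g : Rˣ) : R →ₗ[k] R :=
  LinearMap.mulLeft k (g : R) ∘ₗ LinearMap.mulRight k ((g⁻¹ : Rˣ) : R)

/-- Conjugation on the opposite algebra. -/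
def conjOpL (g : Rˣ) : Rᵐᵒᵖ →ₗ[k] Rᵐᵒᵖ :=
  opL k R ∘ₗ conjL k R g ∘ₗ unopL k R

end Maps

/-- A linear map `R →ₗ A` induces `Rᵐᵒᵖ →ₗ Aᵐᵒᵖ`. -/
def opMapL (k : Type u) [Field k] {R : Type v} {A : Type w} [Ring R] [Algebra k R]
    [Ring A] [Algebra k A] (f : R →ₗ[k] A) : Rᵐᵒᵖ →ₗ[k] Aᵐᵒᵖ :=
  opL k A ∘ₗ f ∘ₗ unopL k R

variable (k : Type u) [Field k]

/-- A Hopf-Galois algebra structure (quantum torsor) on an algebra `R`: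
an algebra map `μ : R → R ⊗ Rᵒᵖ ⊗ R` which is coassociative and satisfies the
two counit-type axioms `(m ⊗ id) ∘ μ = η ⊗ id` and `(id ⊗ m) ∘ μ = id ⊗ η`. -/
structure HopfGaloisStr (R : Type v) [Ring R] [Algebra k R] where
  μ : R →ₐ[k] R ⊗[k] (Rᵐᵒᵖ ⊗[k] R)
  coassoc :
    LinearMap.lTensor R (LinearMap.lTensor Rᵐᵒᵖ μ.toLinearMap) ∘ₗ μ.toLinearMap
      = LinearMap.lTensor R (TensorProduct.assoc k Rᵐᵒᵖ R (Rᵐᵒᵖ ⊗[k] R)).toLinearMap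
        ∘ₗ (TensorProduct.assoc k R (Rᵐᵒᵖ ⊗[k] R) (Rᵐᵒᵖ ⊗[k] R)).toLinearMap
        ∘ₗ LinearMap.rTensor (Rᵐᵒᵖ ⊗[k] R) μ.toLinearMap ∘ₗ μ.toLinearMap
  mul12 : ∀ r : R,
    LinearMap.rTensor R (mulOpL k R) ((TensorProduct.assoc k R Rᵐᵒᵖ R).symm (μ r))
      = (1 : R) ⊗ₜ[k] r
  mul23 : ∀ r : R,
    LinearMap.lTensor R (opMulL k R) (μ r) = r ⊗ₜ[k] (1 : R)

namespace HopfGaloisStr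

variable {k} {R : Type v} [Ring R] [Algebra k R]

/-- A group-like element of a Hopf-Galois algebra: an invertible `g` with
`μ(g) = g ⊗ g⁻¹ ⊗ g`. -/
def IsGroupLike (H : HopfGaloisStr k R) (g : Rˣ) : Prop :=
  H.μ (g : R) = (g : R) ⊗ₜ[k] ((op ((g⁻¹ : Rˣ) : R)) ⊗ₜ[k] (g : R))

/-- A `(g,h)`-skew primitive element of a Hopf-Galois algebra:
`μ(x) = x ⊗ h⁻¹ ⊗ h − g ⊗ g⁻¹xh⁻¹ ⊗ h + g ⊗ g⁻¹ ⊗ x`. -/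
def IsSkewPrimitive (H : HopfGaloisStr k R) (g h : Rˣ) (x : R) : Prop :=
  H.μ x = x ⊗ₜ[k] ((op ((h⁻¹ : Rˣ) : R)) ⊗ₜ[k] ((h : Rˣ) : R))
    - (g : R) ⊗ₜ[k] ((op (((g⁻¹ : Rˣ) : R) * x * ((h⁻¹ : Rˣ) : R))) ⊗ₜ[k] (h : R))
    + (g : R) ⊗ₜ[k] ((op ((g⁻¹ : Rˣ) : R)) ⊗ₜ[k] x)

/-- A quasi-central group-like element: there is a character `α` on the
group-likes such that `x g = α(x) g x` for every group-like `x`. -/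
def IsQuasiCentral (H : HopfGaloisStr k R) (g : Rˣ) : Prop :=
  H.IsGroupLike g ∧ ∃ α : Rˣ → kˣ,
    (∀ x y : Rˣ, H.IsGroupLike x → H.IsGroupLike y → α (x * y) = α x * α y) ∧
    ∀ x : Rˣ, H.IsGroupLike x → (x : R) * (g : R) = ((α x : k)) • ((g : R) * (x : R))

end HopfGaloisStr

section HR

variable {k} {R : Type v} [Ring R] [Algebra k R]

/-- The comultiplication-type map on `Rᵐᵒᵖ ⊗ R`:
`x ⊗ y ↦ (x ⊗ y_(1)) ⊗ (y_(2) ⊗ y_(3))`. -/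
def deltaMap (H : HopfGaloisStr k R) :
    Rᵐᵒᵖ ⊗[k] R →ₗ[k] (Rᵐᵒᵖ ⊗[k] R) ⊗[k] (Rᵐᵒᵖ ⊗[k] R) :=
  (TensorProduct.assoc k Rᵐᵒᵖ R (Rᵐᵒᵖ ⊗[k] R)).symm.toLinearMap
    ∘ₗ LinearMap.lTensor Rᵐᵒᵖ H.μ.toLinearMap

/-- The map `x ⊗ y ↦ x y_(1) ⊗ (y_(2) ⊗ y_(3))`. -/
def PhiMap (H : HopfGaloisStr k R) :
    Rᵐᵒᵖ ⊗[k] R →ₗ[k] R ⊗[k] (Rᵐᵒᵖ ⊗[k] R) :=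
  LinearMap.rTensor (Rᵐᵒᵖ ⊗[k] R) (opMulL k R) ∘ₗ deltaMap H

/-- The underlying subspace of the Hopf algebra `H̲(R)` associated to a
Hopf-Galois algebra `R`: the set of `x ⊗ y ∈ Rᵒᵖ ⊗ R` such that
`x y_(1) ⊗ y_(2) ⊗ y_(3) = 1 ⊗ x ⊗ y`. -/
def HRsub (H : HopfGaloisStr k R) : Submodule k (Rᵐᵒᵖ ⊗[k] R) :=
  LinearMap.eqLocus (PhiMap H) ((TensorProduct.mk k R (Rᵐᵒᵖ ⊗[k] R)) 1)

/-- Group-like elements of `H̲(R)`: elements `u ∈ H̲(R)` with `Δ(u) = u ⊗ u`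
and `ε(u) = 1`. -/
def IsGroupLikeHR (H : HopfGaloisStr k R) (u : Rᵐᵒᵖ ⊗[k] R) : Prop :=
  u ∈ HRsub H ∧ deltaMap H u = u ⊗ₜ[k] u ∧ opMulL k R u = 1

/-- `(u₀,u₁)`-skew primitive elements of `H̲(R)`:
elements `x ∈ H̲(R)` with `Δ(x) = x ⊗ u₁ + u₀ ⊗ x`. -/
def IsSkewPrimitiveHR (H : HopfGaloisStr k R) (u₀ u₁ x : Rᵐᵒᵖ ⊗[k] R) : Prop :=
  x ∈ HRsub H ∧ deltaMap H x = x ⊗ₜ[k] u₁ + u₀ ⊗ₜ[k] x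

end HR

/-- A (not necessarily commutative or cocommutative) Hopf algebra structure
on an algebra `H`, spelled out in terms of linear-map identities. -/
structure HopfAlgStr (H : Type w) [Ring H] [Algebra k H] where
  comul : H →ₐ[k] H ⊗[k] H
  counit : H →ₐ[k] k
  coassoc : ∀ x : H,
    (TensorProduct.assoc k H H H) (LinearMap.rTensor H comul.toLinearMap (comul x))
      = LinearMap.lTensor H comul.toLinearMap (comul x)
  counit_id : ∀ x : H,
    (TensorProduct.lid k H) (LinearMap.rTensor H counit.toLinearMap (comul x)) = x
  id_counit : ∀ x : H,
    (TensorProduct.rid k H) (LinearMap.lTensor H counit.toLinearMap (comul x)) = x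
  antipode : H →ₗ[k] H
  antipode_left : ∀ x : H,
    LinearMap.mul' k H (LinearMap.rTensor H antipode (comul x))
      = algebraMap k H (counit x)
  antipode_right : ∀ x : H,
    LinearMap.mul' k H (LinearMap.lTensor H antipode (comul x))
      = algebraMap k H (counit x)

namespace HopfAlgStr

variable {k} {H : Type w} [Ring H] [Algebra k H]

/-- Group-like element of a Hopf algebra. -/
def IsGroupLikeElem (s : HopfAlgStr k H) (g : H) : Prop :=
  s.comul g = g ⊗ₜ[k] g ∧ s.counit g = 1

/-- `(g,h)`-skew primitive element of a Hopf algebra: `Δ(x) = x ⊗ h + g ⊗ x`. -/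
def IsSkewPrim (s : HopfAlgStr k H) (g h x : H) : Prop :=
  s.comul x = x ⊗ₜ[k] h + g ⊗ₜ[k] x

/-- Convolution product of two linear functionals. -/
def conv (s : HopfAlgStr k H) (α β : H →ₗ[k] k) : H →ₗ[k] k :=
  LinearMap.mul' k k ∘ₗ TensorProduct.map α β ∘ₗ s.comul.toLinearMap

/-- The map `r ↦ α(r_(1)) r_(2)`. -/
def sweedL (s : HopfAlgStr k H) (α : H →ₗ[k] k) : H →ₗ[k] H :=
  (TensorProduct.lid k H).toLinearMap ∘ₗ TensorProduct.map α LinearMap.id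
    ∘ₗ s.comul.toLinearMap

/-- The map `r ↦ (g r_(1) g⁻¹) α(r_(2))`. -/
def sweedConj (s : HopfAlgStr k H) (g : Hˣ) (α : H →ₗ[k] k) : H →ₗ[k] H :=
  (TensorProduct.rid k H).toLinearMap ∘ₗ TensorProduct.map (conjL k H g) α
    ∘ₗ s.comul.toLinearMap

end HopfAlgStr

section Galois

variable {k} {R : Type v} [Ring R] [Algebra k R] {H : Type w} [Ring H] [Algebra k H]

/-- The Galois map `R ⊗ R → R ⊗ H`, `r ⊗ s ↦ r s_(0) ⊗ s_(1)`, for a coaction `ρ`. -/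
def canMap (ρ : R →ₐ[k] R ⊗[k] H) : R ⊗[k] R →ₗ[k] R ⊗[k] H :=
  LinearMap.rTensor H (LinearMap.mul' k R)
    ∘ₗ (TensorProduct.assoc k R R H).symm.toLinearMap
    ∘ₗ LinearMap.lTensor R ρ.toLinearMap

/-- `R` is a right Hopf-Galois object over the Hopf algebra `(H, s)` via the
coaction `ρ`: `ρ` is a comodule-algebra structure with trivial coinvariants and
bijective Galois map. -/
structure IsHopfGaloisObject (s : HopfAlgStr k H) (ρ : R →ₐ[k] R ⊗[k] H) : Prop where
  coassoc : ∀ r : R,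
    (TensorProduct.assoc k R H H) (LinearMap.rTensor H ρ.toLinearMap (ρ r))
      = LinearMap.lTensor R s.comul.toLinearMap (ρ r)
  counit : ∀ r : R,
    (TensorProduct.rid k R) (LinearMap.lTensor R s.counit.toLinearMap (ρ r)) = r
  coinvariants : ∀ r : R, ρ r = r ⊗ₜ[k] (1 : H) → ∃ a : k, r = a • (1 : R)
  galois : Function.Bijective (canMap ρ)

end Galois

/-- A presentation of the generalized ambiskew polynomial algebra
`A(R, X, Y, τ, ω, c, ξ)`: an algebra `A` containing `R` (via `i`) and elements
`X, Y` subject to `X r = τ(r) X`, `Y r = ω(r) Y`, `XY − ξ YX = c`, which is a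
free left `R`-module with basis `{Xᵃ Yᵇ}`. -/
structure IsAmbiskew {R : Type v} [Ring R] [Algebra k R]
    (τ ω : R ≃ₐ[k] R) (c : R) (ξ : kˣ)
    {A : Type w} [Ring A] [Algebra k A] (i : R →ₐ[k] A) (X Y : A) : Prop where
  commX : ∀ r : R, X * i r = i (τ r) * X
  commY : ∀ r : R, Y * i r = i (ω r) * Y
  bracket : X * Y - (ξ : k) • (Y * X) = i c
  free : Function.Bijective (fun f : (ℕ × ℕ) →₀ R =>
    f.sum fun p r => i r * X ^ p.1 * Y ^ p.2)

end


section Aux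

variable {k : Type u} [Field k] {R : Type v} [Ring R] [Algebra k R]

noncomputable instance instACG3 :
    AddCommGroup (Rᵐᵒᵖ ⊗[k] (R ⊗[k] (Rᵐᵒᵖ ⊗[k] R))) :=
  TensorProduct.addCommGroup (R := k) (M := Rᵐᵒᵖ) (N := R ⊗[k] (Rᵐᵒᵖ ⊗[k] R))

noncomputable instance instACG3' :
    AddCommGroup ((R ⊗[k] Rᵐᵒᵖ) ⊗[k] R) :=
  TensorProduct.addCommGroup (R := k) (M := R ⊗[k] Rᵐᵒᵖ) (N := R)

@[simp] lemma unopL_apply' (a : Rᵐᵒᵖ) : unopL k R a = unop a := rfl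
@[simp] lemma opL_apply' (a : R) : opL k R a = op a := rfl

@[simp] lemma opMulL_tmul (a : Rᵐᵒᵖ) (b : R) :
    opMulL k R (a ⊗ₜ[k] b) = unop a * b := by
  simp [opMulL]

@[simp] lemma mulOpL_tmul (a : R) (b : Rᵐᵒᵖ) :
    mulOpL k R (a ⊗ₜ[k] b) = a * unop b := by
  simp [mulOpL]

lemma deltaMap_tmul (H : HopfGaloisStr k R) (a : Rᵐᵒᵖ) (b : R) :
    deltaMap H (a ⊗ₜ[k] b)
      = (TensorProduct.assoc k Rᵐᵒᵖ R (Rᵐᵒᵖ ⊗[k] R)).symm (a ⊗ₜ[k] H.μ b) := by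
  simp [deltaMap]

@[simp] lemma tmul_sub3 (a : Rᵐᵒᵖ) (y z : R ⊗[k] (Rᵐᵒᵖ ⊗[k] R)) :
    a ⊗ₜ[k] (y - z) = a ⊗ₜ[k] y - a ⊗ₜ[k] z :=
  TensorProduct.tmul_sub a y z

@[simp] lemma assocSymm_sub (u v : Rᵐᵒᵖ ⊗[k] (R ⊗[k] (Rᵐᵒᵖ ⊗[k] R))) :
    (TensorProduct.assoc k Rᵐᵒᵖ R (Rᵐᵒᵖ ⊗[k] R)).symm (u - v)
      = (TensorProduct.assoc k Rᵐᵒᵖ R (Rᵐᵒᵖ ⊗[k] R)).symm u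
        - (TensorProduct.assoc k Rᵐᵒᵖ R (Rᵐᵒᵖ ⊗[k] R)).symm v :=
  by convert map_sub (TensorProduct.assoc k Rᵐᵒᵖ R (Rᵐᵒᵖ ⊗[k] R)).symm u v

lemma mu_one_aux (H : HopfGaloisStr k R) :
    H.μ (1:R) = (1:R) ⊗ₜ[k] ((1:Rᵐᵒᵖ) ⊗ₜ[k] (1:R)) := H.μ.map_one'

/-- existence of a dual functional taking value 1 on a nonzero vector -/
lemma exists_dual_one {V : Type w} [AddCommGroup V] [Module k V]
    {v : V} (hv : v ≠ 0) : ∃ φ : Module.Dual k V, φ v = 1 := by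
  by_contra h
  push_neg at h
  obtain ⟨φ, hφ⟩ : ∃ φ : Module.Dual k V, φ v ≠ 0 := by
    by_contra h'
    push_neg at h'
    exact hv ((Module.forall_dual_apply_eq_zero_iff k v).mp h')
  exact h ((φ v)⁻¹ • φ) (by simp [inv_mul_cancel₀ hφ])

end Aux

/-- For a Hopf-Galois algebra `(R,μ)` and a group-like `g`,
the linear map `ψ : P⁰_{g,1}(R) → P_{φ(g),1}(H̲(R))`,
`ψ(x) = g⁻¹ ⊗ x − g⁻¹x ⊗ 1`, is surjective with kernel `k·1`: there is a short
exact sequence `0 → k → P⁰_{g,1}(R) → P_{φ(g),1}(H̲(R)) → 0`. -/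
theorem stmt5 {k : Type u} [Field k] {R : Type v} [Ring R] [Algebra k R]
    [Nontrivial R] (H : HopfGaloisStr k R) (g : Rˣ) (hg : H.IsGroupLike g) :
    -- the scalars `k·1` are `(g,1)`-skew primitive
    (∀ a : k, H.IsSkewPrimitive g 1 (a • (1 : R))) ∧
    -- `ψ` maps `P⁰_{g,1}(R)` into `P_{φ(g),1}(H̲(R))`
    (∀ x : R, H.IsSkewPrimitive g 1 x →
      IsSkewPrimitiveHR H ((op ((g⁻¹ : Rˣ) : R)) ⊗ₜ[k] ((g : Rˣ) : R))
        (1 : Rᵐᵒᵖ ⊗[k] R)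
        ((op ((g⁻¹ : Rˣ) : R)) ⊗ₜ[k] x
          - (op (((g⁻¹ : Rˣ) : R) * x)) ⊗ₜ[k] (1 : R))) ∧
    -- the kernel of `ψ` is exactly `k·1`
    (∀ x : R, H.IsSkewPrimitive g 1 x →
      ((op ((g⁻¹ : Rˣ) : R)) ⊗ₜ[k] x
          - (op (((g⁻¹ : Rˣ) : R) * x)) ⊗ₜ[k] (1 : R) = 0
        ↔ ∃ a : k, x = a • (1 : R))) ∧
    -- `ψ` is surjective onto `P_{φ(g),1}(H̲(R))`
    (∀ u : Rᵐᵒᵖ ⊗[k] R,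
      IsSkewPrimitiveHR H ((op ((g⁻¹ : Rˣ) : R)) ⊗ₜ[k] ((g : Rˣ) : R))
        (1 : Rᵐᵒᵖ ⊗[k] R) u →
      ∃ x : R, H.IsSkewPrimitive g 1 x ∧
        (op ((g⁻¹ : Rˣ) : R)) ⊗ₜ[k] x
          - (op (((g⁻¹ : Rˣ) : R) * x)) ⊗ₜ[k] (1 : R) = u) := by
  clear hg
  refine ⟨?_, ?_, ?_, ?_⟩
  · -- part 1: scalars are skew primitive
    intro a
    unfold HopfGaloisStr.IsSkewPrimitive
    simp only [inv_one, Units.val_one, mul_one, map_smul, map_one, mu_one_aux,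
      Algebra.TensorProduct.one_def, mul_smul_comm, op_smul, tmul_smul,
      smul_tmul']
    module
  · -- part 2: psi maps into skew primitives of H(R)
    intro x hx
    unfold HopfGaloisStr.IsSkewPrimitive at hx
    simp only [inv_one, Units.val_one, mul_one] at hx
    constructor
    · refine LinearMap.mem_eqLocus.mpr ?_
      simp only [PhiMap, LinearMap.comp_apply, deltaMap, LinearEquiv.coe_coe,
        map_sub, LinearMap.lTensor_tmul, AlgHom.toLinearMap_apply, hx,
        map_one, mu_one_aux, Algebra.TensorProduct.one_def, tmul_sub, tmul_add,
        tmul_sub3, assocSymm_sub,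
        assoc_symm_tmul, map_add, LinearMap.rTensor_tmul, opMulL_tmul,
        unop_op, Units.inv_mul, mk_apply, mul_one, one_mul, op_one]
      abel
    · simp only [deltaMap, LinearMap.comp_apply, LinearEquiv.coe_coe,
        map_sub, LinearMap.lTensor_tmul, AlgHom.toLinearMap_apply, hx,
        map_one, mu_one_aux, Algebra.TensorProduct.one_def, tmul_sub, tmul_add,
        tmul_sub3, assocSymm_sub,
        assoc_symm_tmul, map_add, sub_tmul, add_tmul, op_one]
      abel
  · -- part 3: kernel is k•1
    intro x hx
    constructor
    · intro h0
      have hne : ((g⁻¹ : Rˣ) : R) ≠ 0 := Units.ne_zero _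
      obtain ⟨φ, hφ⟩ := exists_dual_one (k := k) hne
      set L : Rᵐᵒᵖ ⊗[k] R →ₗ[k] R :=
        (TensorProduct.lid k R).toLinearMap
          ∘ₗ TensorProduct.map (φ ∘ₗ unopL k R) LinearMap.id with hL
      have := congrArg L h0
      simp only [hL, map_sub, LinearMap.comp_apply, LinearEquiv.coe_coe,
        map_tmul, unopL_apply', unop_op, LinearMap.id_apply, lid_tmul,
        hφ, one_smul, map_zero] at this
      refine ⟨φ (((g⁻¹ : Rˣ) : R) * x), ?_⟩
      rw [← sub_eq_zero] ; simpa using this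
    · rintro ⟨a, rfl⟩
      simp only [mul_smul_comm, mul_one, op_smul, smul_tmul', tmul_smul]
      module
  · -- part 4: surjectivity
    rintro u ⟨-, hΔ⟩
    obtain ⟨ε, hε⟩ := exists_dual_one (k := k)
      (Units.ne_zero g⁻¹ : ((g⁻¹ : Rˣ) : R) ≠ 0)
    set εg : Rᵐᵒᵖ ⊗[k] R →ₗ[k] R :=
      (TensorProduct.lid k R).toLinearMap
        ∘ₗ TensorProduct.map (ε ∘ₗ unopL k R) LinearMap.id with hεg
    have hεg_tmul : ∀ (a : Rᵐᵒᵖ) (b : R), εg (a ⊗ₜ[k] b) = ε (unop a) • b := by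
      intro a b
      simp [hεg]
    have key0 : ∀ (a : Rᵐᵒᵖ) (s : R ⊗[k] (Rᵐᵒᵖ ⊗[k] R)),
        LinearMap.rTensor (Rᵐᵒᵖ ⊗[k] R) εg
          ((TensorProduct.assoc k Rᵐᵒᵖ R (Rᵐᵒᵖ ⊗[k] R)).symm (a ⊗ₜ[k] s))
          = ε (unop a) • s := by
      intro a s
      induction s using TensorProduct.induction_on with
      | zero => simp
      | tmul p q =>
        rw [assoc_symm_tmul, LinearMap.rTensor_tmul, hεg_tmul, smul_tmul']
      | add s t hs ht => rw [tmul_add, map_add, map_add, hs, ht, smul_add]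
    have key1 : ∀ t : Rᵐᵒᵖ ⊗[k] R,
        LinearMap.rTensor (Rᵐᵒᵖ ⊗[k] R) εg (deltaMap H t) = H.μ (εg t) := by
      intro t
      induction t using TensorProduct.induction_on with
      | zero => simp
      | tmul a b =>
        rw [deltaMap_tmul, key0, hεg_tmul, map_smul]
      | add s t hs ht => rw [map_add, map_add, map_add, map_add, hs, ht]
    set x : R := εg u with hxdef
    have hμx : H.μ x = x ⊗ₜ[k] (1 : Rᵐᵒᵖ ⊗[k] R) + (g : R) ⊗ₜ[k] u := by
      have h := congrArg (LinearMap.rTensor (Rᵐᵒᵖ ⊗[k] R) εg) hΔ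
      rw [key1] at h
      rw [h, map_add, LinearMap.rTensor_tmul, LinearMap.rTensor_tmul,
        hεg_tmul, unop_op, hε, one_smul]
    set Ψ : Rᵐᵒᵖ ⊗[k] R →ₗ[k] R ⊗[k] R :=
      TensorProduct.map (LinearMap.mulLeft k ((g : Rˣ) : R) ∘ₗ unopL k R)
        LinearMap.id with hΨdef
    have key2 : ∀ t : Rᵐᵒᵖ ⊗[k] R,
        LinearMap.rTensor R (mulOpL k R)
          ((TensorProduct.assoc k R Rᵐᵒᵖ R).symm ((g : R) ⊗ₜ[k] t)) = Ψ t := by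
      intro t
      induction t using TensorProduct.induction_on with
      | zero => simp
      | tmul p q =>
        rw [assoc_symm_tmul, LinearMap.rTensor_tmul, hΨdef]
        simp
      | add s t hs ht => rw [tmul_add, map_add, map_add, map_add, hs, ht]
    have h12 := H.mul12 x
    rw [hμx, map_add, map_add, key2, Algebra.TensorProduct.one_def,
      assoc_symm_tmul, LinearMap.rTensor_tmul, mulOpL_tmul, unop_one,
      mul_one] at h12
    have hΨu : Ψ u = (1 : R) ⊗ₜ[k] x - x ⊗ₜ[k] (1 : R) := by
      rw [← h12] ; abel
    set G : R ⊗[k] R →ₗ[k] Rᵐᵒᵖ ⊗[k] R :=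
      TensorProduct.map (opL k R ∘ₗ LinearMap.mulLeft k ((g⁻¹ : Rˣ) : R))
        LinearMap.id with hGdef
    have key3 : ∀ t : Rᵐᵒᵖ ⊗[k] R, G (Ψ t) = t := by
      intro t
      induction t using TensorProduct.induction_on with
      | zero => simp
      | tmul p q =>
        rw [hΨdef, hGdef]
        simp [← mul_assoc, Units.inv_mul]
      | add s t hs ht => rw [map_add, map_add, hs, ht]
    have hueq : op ((g⁻¹ : Rˣ) : R) ⊗ₜ[k] x
        - op (((g⁻¹ : Rˣ) : R) * x) ⊗ₜ[k] (1 : R) = u := by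
      have h := key3 u
      rw [hΨu, map_sub, hGdef] at h
      simpa [mul_one] using h
    refine ⟨x, ?_, hueq⟩
    unfold HopfGaloisStr.IsSkewPrimitive
    simp only [inv_one, Units.val_one, mul_one]
    rw [hμx, ← hueq, Algebra.TensorProduct.one_def, tmul_sub, op_one]
    abel
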